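/- Let R be a ring, let N and M be ℤ-indexed chain complexes of R-modules, let (f, g, φ) be a contraction from N to M, and let δ be a perturbation of N that is pointwise nilpotent with respect to φ. Define Σx = Σ_{i≥0} (−1)^i (φδ)^i x, ∂_δ = f ∘ δ ∘ Σ ∘ g, f_δ = f ∘ (id − δ ∘ Σ ∘ φ), and g_δ = Σ ∘ g. Then f_δ and g_δ are chain maps with respect to the perturbed differentials: (∂_M + ∂_δ) ∘ f_δ = f_δ ∘ (∂_N + δ) and (∂_N + δ) ∘ g_δ = g_δ ∘ (∂_M + ∂_δ). -/

import Mathlib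

/-- A contraction between ℤ-graded chain complexes of `R`-modules, presented via total
modules `N` and `M` with internal ℤ-gradings `𝒩`, `ℳ`, differentials `dN`, `dM` of
degree `-1` squaring to zero, chain maps `f : N → M`, `g : M → N` of degree `0`, and a
homotopy operator `φ : N → N` of degree `+1`, satisfying
`f ∘ g = id`, `g ∘ f + φ ∘ dN + dN ∘ φ = id`, `f ∘ φ = 0`, `φ ∘ g = 0`, `φ ∘ φ = 0`. -/
structure Contraction (R : Type) [Ring R]
    (N : Type) [AddCommGroup N] [Module R N]
    (M : Type) [AddCommGroup M] [Module R M]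
    (𝒩 : ℤ → Submodule R N) (ℳ : ℤ → Submodule R M)
    (dN : N →ₗ[R] N) (dM : M →ₗ[R] M)
    (f : N →ₗ[R] M) (g : M →ₗ[R] N) (φ : N →ₗ[R] N) : Prop where
  gradedN : DirectSum.IsInternal 𝒩
  gradedM : DirectSum.IsInternal ℳ
  dN_deg : ∀ i : ℤ, ∀ x ∈ 𝒩 i, dN x ∈ 𝒩 (i - 1)
  dM_deg : ∀ i : ℤ, ∀ x ∈ ℳ i, dM x ∈ ℳ (i - 1)
  dN_sq : dN ∘ₗ dN = 0
  dM_sq : dM ∘ₗ dM = 0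
  f_deg : ∀ i : ℤ, ∀ x ∈ 𝒩 i, f x ∈ ℳ i
  g_deg : ∀ i : ℤ, ∀ x ∈ ℳ i, g x ∈ 𝒩 i
  φ_deg : ∀ i : ℤ, ∀ x ∈ 𝒩 i, φ x ∈ 𝒩 (i + 1)
  f_chain : dM ∘ₗ f = f ∘ₗ dN
  g_chain : dN ∘ₗ g = g ∘ₗ dM
  fg : f ∘ₗ g = LinearMap.id
  homotopy : g ∘ₗ f + φ ∘ₗ dN + dN ∘ₗ φ = LinearMap.id
  fφ : f ∘ₗ φ = 0
  φg : φ ∘ₗ g = 0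
  φφ : φ ∘ₗ φ = 0

open Finset

/-!
Pointwise nilpotency of `φδ` makes the alternating series `S` a two-sided inverse of `1 + φδ` in
`End N`. Moving `f` across `dM` and `g` across `dN` turns both chain-map equations into
identities in the ring `End N`, which follow from `S (1 + φδ) = 1 = (1 + φδ) S`,
`g f = 1 - φ dN - dN φ` and the perturbation equation `dN δ + δ dN + δ² = 0`.
-/

theorem neg_pow_eq_zsmul {A : Type*} [Ring A] (a : A) (n : ℕ) :
    (-a) ^ n = ((-1 : ℤ) ^ n) • a ^ n := by
  rw [← neg_one_zsmul a, smul_pow]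

section AlternatingSeries

variable {R N : Type*} [Ring R] [AddCommGroup N] [Module R N]

theorem alternating_sum_pow_apply (P : Module.End R N) (m : ℕ) (x : N) :
    ∑ i ∈ range m, ((-1 : ℤ) ^ i) • (P ^ i) x = (∑ i ∈ range m, (-P) ^ i) x := by
  rw [LinearMap.sum_apply]
  exact sum_congr rfl fun i _ => by rw [neg_pow_eq_zsmul P, LinearMap.smul_apply]

theorem neg_pow_apply_eq_zero {P : Module.End R N} {m : ℕ} {x : N} (hm : (P ^ m) x = 0) :
    ((-P) ^ m) x = 0 := by
  rw [neg_pow_eq_zsmul P, LinearMap.smul_apply, hm, smul_zero]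

variable {P S : Module.End R N}
  (hS : ∀ x m, (P ^ m) x = 0 → S x = ∑ i ∈ range m, ((-1 : ℤ) ^ i) • (P ^ i) x)
  (hP : ∀ x, ∃ m, (P ^ m) x = 0)
include hS hP

theorem one_add_mul_alternating_series_eq_one : (1 + P) * S = 1 := by
  ext x
  obtain ⟨m, hm⟩ := hP x
  have h := congr($(mul_neg_geom_sum (-P) m) x)
  simp only [sub_neg_eq_add, Module.End.mul_apply, LinearMap.sub_apply,
    neg_pow_apply_eq_zero hm, sub_zero] at h
  rw [Module.End.mul_apply, hS x m hm, alternating_sum_pow_apply, h]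

theorem alternating_series_mul_one_add_eq_one : S * (1 + P) = 1 := by
  ext x
  obtain ⟨m, hm⟩ := hP x
  have hm_one_add : (P ^ m) ((1 + P) x) = 0 := by
    rw [← Module.End.mul_apply, ((Commute.one_right _).add_right (Commute.pow_self P m)).eq,
      Module.End.mul_apply, hm, map_zero]
  have h := congr($(geom_sum_mul_neg (-P) m) x)
  simp only [sub_neg_eq_add, Module.End.mul_apply, LinearMap.sub_apply,
    neg_pow_apply_eq_zero hm, sub_zero] at h
  rw [Module.End.mul_apply, hS _ m hm_one_add, alternating_sum_pow_apply, h]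

end AlternatingSeries

section PerturbationIdentities

variable {A : Type*} [Ring A] {d δ h S : A}

theorem add_mul_self_eq_zero_iff (hd : d * d = 0) :
    (d + δ) * (d + δ) = 0 ↔ d * δ + δ * d + δ * δ = 0 := by
  rw [show (d + δ) * (d + δ) = d * d + (d * δ + δ * d + δ * δ) by noncomm_ring, hd, zero_add]

theorem perturbed_projection_intertwines (hδ : d * δ + δ * d + δ * δ = 0)
    (hSl : S * (1 + h * δ) = 1) (hSr : (1 + h * δ) * S = 1) :
    (d + δ * S * (1 - h * d - d * h)) * (1 - δ * S * h) = (1 - δ * S * h) * (d + δ) := by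
  have hSl' : S * (h * δ) = 1 - S := by rw [← hSl, mul_one_add, add_sub_cancel_left]
  have hSr' : h * δ * S = 1 - S := by rw [← hSr, one_add_mul, add_sub_cancel_left]
  rw [← sub_eq_zero]
  calc _ = -((d * δ + δ * d + δ * δ) * S * h)
          + δ * S * h * (d * δ + δ * d + δ * δ) * S * h
          + δ * S * d * (h * δ * S - (1 - S)) * h
          + δ * (S * (h * δ) - (1 - S)) * (1 - d * S * h - δ * S * h) := by noncomm_ring
    _ = 0 := by rw [hSl', hSr', hδ]; noncomm_ring

theorem perturbed_inclusion_intertwines (hδ : d * δ + δ * d + δ * δ = 0)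
    (hSl : S * (1 + h * δ) = 1) (hSr : (1 + h * δ) * S = 1) :
    (d + δ) * S = S * d + S * (1 - h * d - d * h) * δ * S := by
  have hSl' : S * (h * δ) = 1 - S := by rw [← hSl, mul_one_add, add_sub_cancel_left]
  have hSr' : h * δ * S = 1 - S := by rw [← hSr, one_add_mul, add_sub_cancel_left]
  rw [← sub_eq_zero]
  calc _ = S * h * (d * δ + δ * d + δ * δ) * S
          + S * d * (h * δ * S - (1 - S))
          - (S * (h * δ) - (1 - S)) * (d * S + δ * S) := by noncomm_ring
    _ = 0 := by rw [hSl', hSr', hδ]; noncomm_ring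

end PerturbationIdentities

theorem perturbed_maps_are_chain_maps_general
    (R : Type) [Ring R]
    (N : Type) [AddCommGroup N] [Module R N]
    (M : Type) [AddCommGroup M] [Module R M]
    (𝒩 : ℤ → Submodule R N) (ℳ : ℤ → Submodule R M)
    (dN : N →ₗ[R] N) (dM : M →ₗ[R] M)
    (f : N →ₗ[R] M) (g : M →ₗ[R] N) (φ : N →ₗ[R] N)
    (hc : Contraction R N M 𝒩 ℳ dN dM f g φ)
    (δ : N →ₗ[R] N)
    (δ_pert : (dN + δ) ∘ₗ (dN + δ) = 0)
    (δ_nil : ∀ x : N, ∃ m : ℕ, ((φ ∘ₗ δ) ^ m) x = 0)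
    (S : N →ₗ[R] N)
    (hS : ∀ (x : N) (m : ℕ), ((φ ∘ₗ δ) ^ m) x = 0 →
      S x = ∑ i ∈ Finset.range m, ((-1 : ℤ) ^ i) • (((φ ∘ₗ δ) ^ i) x)) :
    ((dM + f ∘ₗ δ ∘ₗ S ∘ₗ g) ∘ₗ (f ∘ₗ (LinearMap.id - δ ∘ₗ S ∘ₗ φ))
        = (f ∘ₗ (LinearMap.id - δ ∘ₗ S ∘ₗ φ)) ∘ₗ (dN + δ)) ∧
    ((dN + δ) ∘ₗ (S ∘ₗ g) = (S ∘ₗ g) ∘ₗ (dM + f ∘ₗ δ ∘ₗ S ∘ₗ g)) := by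
  have hSl : S * (1 + φ * δ) = 1 := alternating_series_mul_one_add_eq_one hS δ_nil
  have hSr : (1 + φ * δ) * S = 1 := one_add_mul_alternating_series_eq_one hS δ_nil
  have hδ := (add_mul_self_eq_zero_iff hc.dN_sq).1 δ_pert
  have hgf : g ∘ₗ f = 1 - φ * dN - dN * φ := by
    rw [Module.End.one_eq_id, ← hc.homotopy, Module.End.mul_eq_comp, Module.End.mul_eq_comp]
    abel
  constructor
  · calc _ = f ∘ₗ ((dN + δ * S * (g ∘ₗ f)) * (1 - δ * S * φ)) := by
          rw [← LinearMap.comp_assoc, LinearMap.add_comp, hc.f_chain]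
          simp only [Module.End.mul_eq_comp, Module.End.one_eq_id, LinearMap.comp_add,
            LinearMap.add_comp, LinearMap.comp_assoc]
      _ = f ∘ₗ ((1 - δ * S * φ) * (dN + δ)) := by
          rw [hgf, perturbed_projection_intertwines hδ hSl hSr]
      _ = _ := rfl
  · calc _ = ((dN + δ) * S) ∘ₗ g := rfl
      _ = (S * dN + S * (g ∘ₗ f) * δ * S) ∘ₗ g := by
          rw [hgf, perturbed_inclusion_intertwines hδ hSl hSr]
      _ = _ := by
          simp only [Module.End.mul_eq_comp, LinearMap.comp_add, LinearMap.add_comp,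
            LinearMap.comp_assoc, hc.g_chain]

/-- The perturbed maps `f_δ = f ∘ (id - δ ∘ S ∘ φ)` and `g_δ = S ∘ g` are chain maps
with respect to the perturbed differentials `dN + δ` and `dM + f ∘ δ ∘ S ∘ g`. -/
theorem perturbed_maps_are_chain_maps
    (R : Type) [Ring R]
    (N : Type) [AddCommGroup N] [Module R N]
    (M : Type) [AddCommGroup M] [Module R M]
    (𝒩 : ℤ → Submodule R N) (ℳ : ℤ → Submodule R M)
    (dN : N →ₗ[R] N) (dM : M →ₗ[R] M)
    (f : N →ₗ[R] M) (g : M →ₗ[R] N) (φ : N →ₗ[R] N)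
    (hc : Contraction R N M 𝒩 ℳ dN dM f g φ)
    (δ : N →ₗ[R] N)
    (δ_deg : ∀ i : ℤ, ∀ x ∈ 𝒩 i, δ x ∈ 𝒩 (i - 1))
    (δ_pert : (dN + δ) ∘ₗ (dN + δ) = 0)
    (δ_nil : ∀ x : N, ∃ m : ℕ, ((φ ∘ₗ δ) ^ m) x = 0)
    (S : N →ₗ[R] N)
    (hS : ∀ (x : N) (m : ℕ), ((φ ∘ₗ δ) ^ m) x = 0 →
      S x = ∑ i ∈ Finset.range m, ((-1 : ℤ) ^ i) • (((φ ∘ₗ δ) ^ i) x)) :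
    ((dM + f ∘ₗ δ ∘ₗ S ∘ₗ g) ∘ₗ (f ∘ₗ (LinearMap.id - δ ∘ₗ S ∘ₗ φ))
        = (f ∘ₗ (LinearMap.id - δ ∘ₗ S ∘ₗ φ)) ∘ₗ (dN + δ)) ∧
    ((dN + δ) ∘ₗ (S ∘ₗ g) = (S ∘ₗ g) ∘ₗ (dM + f ∘ₗ δ ∘ₗ S ∘ₗ g)) :=
  perturbed_maps_are_chain_maps_general R N M 𝒩 ℳ dN dM f g φ hc δ δ_pert δ_nil S hS
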